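/- Let S be an odd polynomial with |S(z)| ≤ 1 for all |z| ≤ R_c where R_c = L_c + 1, L_c > 1, and suppose |S(z) - sign(z)| ≤ δ_c/L_c for all τ_c ≤ |z| ≤ R_c, with τ_c ∈ (0, L_c - 1] and δ_c ∈ (0,1). Define P_c(x) = (1/2)((x+1)S(x+1) - (x-1)S(x-1)). Then P_c is an odd polynomial of degree at most deg(S)+1, |P_c(x) - x| ≤ δ_c for all |x| ≤ 1 - τ_c, |P_c(x) - sign(x)| ≤ δ_c for all 1 + τ_c ≤ |x| ≤ L_c, and |P_c(x)| ≤ 1 for all x ∈ [-1,1]. -/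
import Mathlib


open Polynomial

theorem clip_polynomial_from_shifted_sign
    (S : Polynomial ℝ) (Lc τc δc : ℝ)
    (hLc : 1 < Lc) (hτc : 0 < τc) (hτcLe : τc ≤ Lc - 1) (hδc0 : 0 < δc) (hδc1 : δc < 1)
    (hodd : ∀ z : ℝ, S.eval (-z) = -S.eval z)
    (hbound : ∀ z : ℝ, |z| ≤ Lc + 1 → |S.eval z| ≤ 1)
    (happrox : ∀ z : ℝ, τc ≤ |z| → |z| ≤ Lc + 1 → |S.eval z - Real.sign z| ≤ δc / Lc) :
    let Pc : Polynomial ℝ :=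
      Polynomial.C (1/2) * ((X + 1) * S.comp (X + 1) - (X - 1) * S.comp (X - 1));
    (∀ x : ℝ, Pc.eval (-x) = -Pc.eval x) ∧
    Pc.natDegree ≤ S.natDegree + 1 ∧
    (∀ x : ℝ, |x| ≤ 1 - τc → |Pc.eval x - x| ≤ δc) ∧
    (∀ x : ℝ, 1 + τc ≤ |x| → |x| ≤ Lc → |Pc.eval x - Real.sign x| ≤ δc) ∧
    (∀ x : ℝ, |x| ≤ 1 → |Pc.eval x| ≤ 1) := by
  intro Pc
  have hLc0 : (0:ℝ) < Lc := by linarith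
  set d : ℝ := δc / Lc with hd
  have hd0 : 0 < d := div_pos hδc0 hLc0
  have hdδ : d ≤ δc := by
    rw [hd, div_le_iff₀ hLc0]; nlinarith
  have heval : ∀ x : ℝ, Pc.eval x
      = (1/2) * ((x+1) * S.eval (x+1) - (x-1) * S.eval (x-1)) := by
    intro x; simp [Pc, eval_comp]
  have hodd' : ∀ x : ℝ, Pc.eval (-x) = -Pc.eval x := by
    intro x
    rw [heval, heval]
    have h1 : S.eval (-x + 1) = -S.eval (x - 1) := by
      have := hodd (x - 1); rw [show -(x-1) = -x+1 by ring] at this; linarith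
    have h2 : S.eval (-x - 1) = -S.eval (x + 1) := by
      have := hodd (x + 1); rw [show -(x+1) = -x-1 by ring] at this; linarith
    rw [h1, h2]; ring
  refine ⟨hodd', ?_, ?_, ?_, ?_⟩
  · -- degree bound
    have hx1 : (X + 1 : ℝ[X]).natDegree = 1 := by
      simpa using natDegree_X_add_C (1:ℝ)
    have hx2 : (X - 1 : ℝ[X]).natDegree = 1 := by
      simpa using natDegree_X_sub_C (1:ℝ)
    have hc1 : (S.comp (X + 1 : ℝ[X])).natDegree ≤ S.natDegree := by
      rw [natDegree_comp, hx1, mul_one]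
    have hc2 : (S.comp (X - 1 : ℝ[X])).natDegree ≤ S.natDegree := by
      rw [natDegree_comp, hx2, mul_one]
    have h1 : ((X + 1 : ℝ[X]) * S.comp (X + 1)).natDegree ≤ S.natDegree + 1 := by
      refine le_trans natDegree_mul_le ?_; omega
    have h2 : ((X - 1 : ℝ[X]) * S.comp (X - 1)).natDegree ≤ S.natDegree + 1 := by
      refine le_trans natDegree_mul_le ?_; omega
    calc Pc.natDegree ≤ (C (1/2 : ℝ)).natDegree
          + ((X + 1) * S.comp (X + 1) - (X - 1) * S.comp (X - 1)).natDegree :=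
            natDegree_mul_le
      _ ≤ 0 + (S.natDegree + 1) := by
          refine add_le_add (le_of_eq (natDegree_C _)) ?_
          exact le_trans (natDegree_sub_le _ _) (by omega)
      _ = S.natDegree + 1 := by omega
  · -- middle approximation
    intro x hx
    have hxabs := abs_le.mp hx
    have h1p : τc ≤ x + 1 := by
      cases abs_le.mp hx; linarith
    have ha : |S.eval (x+1) - 1| ≤ d := by
      have hs : Real.sign (x+1) = 1 := Real.sign_of_pos (by linarith)
      have := happrox (x+1) (by rw [abs_of_pos (by linarith : (0:ℝ) < x+1)]; exact h1p)
        (by rw [abs_of_pos (by linarith : (0:ℝ) < x+1)]; linarith)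
      rw [hs] at this; exact this
    have hb : |S.eval (x-1) + 1| ≤ d := by
      have hneg : x - 1 < 0 := by linarith
      have hs : Real.sign (x-1) = -1 := Real.sign_of_neg hneg
      have := happrox (x-1) (by rw [abs_of_neg hneg]; linarith)
        (by rw [abs_of_neg hneg]; linarith)
      rw [hs] at this
      simpa [sub_neg_eq_add] using this
    rw [heval]
    rw [abs_le] at ha hb ⊢
    constructor <;>
      nlinarith [mul_le_mul_of_nonneg_left ha.2 (by linarith : (0:ℝ) ≤ x+1),
        mul_le_mul_of_nonneg_left ha.1 (by linarith : (0:ℝ) ≤ x+1),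
        mul_le_mul_of_nonneg_left hb.2 (by linarith : (0:ℝ) ≤ 1-x),
        mul_le_mul_of_nonneg_left hb.1 (by linarith : (0:ℝ) ≤ 1-x)]
  · -- outer approximation
    intro x hx1 hx2
    have key : ∀ y : ℝ, 1 + τc ≤ y → y ≤ Lc → |Pc.eval y - 1| ≤ δc := by
      intro y hy1 hy2
      have ha : |S.eval (y+1) - 1| ≤ d := by
        have hs : Real.sign (y+1) = 1 := Real.sign_of_pos (by linarith)
        have := happrox (y+1) (by rw [abs_of_pos (by linarith : (0:ℝ) < y+1)]; linarith)
          (by rw [abs_of_pos (by linarith : (0:ℝ) < y+1)]; linarith)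
        rw [hs] at this; exact this
      have hb : |S.eval (y-1) - 1| ≤ d := by
        have hs : Real.sign (y-1) = 1 := Real.sign_of_pos (by linarith)
        have := happrox (y-1) (by rw [abs_of_pos (by linarith : (0:ℝ) < y-1)]; linarith)
          (by rw [abs_of_pos (by linarith : (0:ℝ) < y-1)]; linarith)
        rw [hs] at this; exact this
      have hdy : d * y ≤ δc := by
        rw [hd]
        calc δc / Lc * y ≤ δc / Lc * Lc := by
              apply mul_le_mul_of_nonneg_left hy2 (le_of_lt hd0)
          _ = δc := by field_simp
      rw [heval, abs_le] at *
      constructor <;>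
        nlinarith [mul_le_mul_of_nonneg_left ha.2 (by linarith : (0:ℝ) ≤ y+1),
          mul_le_mul_of_nonneg_left ha.1 (by linarith : (0:ℝ) ≤ y+1),
          mul_le_mul_of_nonneg_left hb.2 (by linarith : (0:ℝ) ≤ y-1),
          mul_le_mul_of_nonneg_left hb.1 (by linarith : (0:ℝ) ≤ y-1)]
    rcases lt_trichotomy x 0 with hneg | hzero | hpos
    · have hsx : Real.sign x = -1 := Real.sign_of_neg hneg
      rw [hsx]
      have h1 : 1 + τc ≤ -x := by rwa [abs_of_neg hneg] at hx1
      have h2 : -x ≤ Lc := by rwa [abs_of_neg hneg] at hx2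
      have := key (-x) h1 h2
      rw [hodd' x] at this
      calc |Pc.eval x - (-1)| = |-(Pc.eval x) - 1| := by rw [abs_sub_comm]; ring_nf
        _ ≤ δc := this
    · exfalso; rw [hzero] at hx1; simp at hx1; linarith
    · have hsx : Real.sign x = 1 := Real.sign_of_pos hpos
      rw [hsx]
      exact key x (by rwa [abs_of_pos hpos] at hx1) (by rwa [abs_of_pos hpos] at hx2)
  · -- clipping bound
    intro x hx
    have hxabs := abs_le.mp hx
    have ha : |S.eval (x+1)| ≤ 1 := hbound (x+1) (by
      rw [abs_le]; constructor <;> linarith)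
    have hb : |S.eval (x-1)| ≤ 1 := hbound (x-1) (by
      rw [abs_le]; constructor <;> linarith)
    rw [heval]
    rw [abs_le] at ha hb ⊢
    constructor <;>
      nlinarith [mul_le_mul_of_nonneg_left ha.2 (by linarith : (0:ℝ) ≤ x+1),
        mul_le_mul_of_nonneg_left ha.1 (by linarith : (0:ℝ) ≤ x+1),
        mul_le_mul_of_nonneg_left hb.2 (by linarith : (0:ℝ) ≤ 1-x),
        mul_le_mul_of_nonneg_left hb.1 (by linarith : (0:ℝ) ≤ 1-x)]
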